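/- arXiv:2602.09887 — 4 statements merged into one kernel-verified Lean document; each statement's English description precedes it below -/
import Mathlib

section
/- Let θ ∈ (0,1), λ ∈ (0,1], p, g ∈ ℝ. For the two-asset geometric mean market maker with weights (θ, 1−θ), the log marginal price of the mixed reserve vector (1−λ)·R(1,p) + λ·R(1,p+g) equals p + log(1 − λ + λ·e^{θg}) − log(1 − λ + λ·e^{−(1−θ)g}). Equivalently, writing Ψ(g) = g − log(1 − λ + λ·e^{θg}) + log(1 − λ + λ·e^{−(1−θ)g}), the log marginal price of the mixture equals p + g − Ψ(g). -/
open Real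

/-- Reserve vector of the two-asset G3M with weights `(θ, 1-θ)` at liquidity `L`
and log price `p`. -/
noncomputable def g3mReserves (θ L p : ℝ) : ℝ × ℝ :=
  (L * (θ / (1 - θ) * Real.exp (-p)) ^ (1 - θ), L * ((1 - θ) / θ * Real.exp p) ^ θ)

/-- Log marginal price of the G3M with weights `(θ, 1-θ)` at reserves `(x, y)`. -/
noncomputable def g3mLogMarginPrice (θ x y : ℝ) : ℝ :=
  Real.log (θ / (1 - θ) * (y / x))

/-- One-block pre-arbitrage gap update map of the partially active AMM. -/
noncomputable def Psi (θ lam g : ℝ) : ℝ :=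
  g - Real.log (1 - lam + lam * Real.exp (θ * g))
    + Real.log (1 - lam + lam * Real.exp (-(1 - θ) * g))

theorem stmt0 (θ lam p g : ℝ) (hθ : θ ∈ Set.Ioo (0:ℝ) 1) (hlam : lam ∈ Set.Ioc (0:ℝ) 1) :
    g3mLogMarginPrice θ
      ((1 - lam) * (g3mReserves θ 1 p).1 + lam * (g3mReserves θ 1 (p + g)).1)
      ((1 - lam) * (g3mReserves θ 1 p).2 + lam * (g3mReserves θ 1 (p + g)).2)
      = p + Real.log (1 - lam + lam * Real.exp (θ * g))
          - Real.log (1 - lam + lam * Real.exp (-(1 - θ) * g)) ∧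
    g3mLogMarginPrice θ
      ((1 - lam) * (g3mReserves θ 1 p).1 + lam * (g3mReserves θ 1 (p + g)).1)
      ((1 - lam) * (g3mReserves θ 1 p).2 + lam * (g3mReserves θ 1 (p + g)).2)
      = p + g - Psi θ lam g := by
  obtain ⟨hθ0, hθ1⟩ := hθ
  obtain ⟨hl0, hl1⟩ := hlam
  have h1θ : (0:ℝ) < 1 - θ := by linarith
  have ha : (0:ℝ) < θ / (1 - θ) := div_pos hθ0 h1θ
  have hb : (0:ℝ) < (1 - θ) / θ := div_pos h1θ hθ0
  set la := Real.log (θ / (1 - θ)) with hla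
  have hea : θ / (1 - θ) = Real.exp la := (Real.exp_log ha).symm
  have heb : (1 - θ) / θ = Real.exp (-la) := by
    rw [hla, ← Real.log_inv, Real.exp_log (by positivity)]
    field_simp
  -- reserves as exponentials
  have hx : ∀ q : ℝ, (θ / (1 - θ) * Real.exp (-q)) ^ (1 - θ)
      = Real.exp ((la - q) * (1 - θ)) := by
    intro q
    rw [hea, ← Real.exp_add, ← Real.exp_mul]
    ring_nf
  have hy : ∀ q : ℝ, ((1 - θ) / θ * Real.exp q) ^ θ
      = Real.exp ((q - la) * θ) := by
    intro q
    rw [heb, ← Real.exp_add, ← Real.exp_mul]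
    ring_nf
  set A := 1 - lam + lam * Real.exp (θ * g) with hA
  set B := 1 - lam + lam * Real.exp (-(1 - θ) * g) with hB
  have hApos : 0 < A := by
    have : 0 < lam * Real.exp (θ * g) := by positivity
    nlinarith
  have hBpos : 0 < B := by
    have : 0 < lam * Real.exp (-(1 - θ) * g) := by positivity
    nlinarith
  have hX : (1 - lam) * (g3mReserves θ 1 p).1 + lam * (g3mReserves θ 1 (p + g)).1
      = Real.exp ((la - p) * (1 - θ)) * B := by
    simp only [g3mReserves, one_mul, hx]
    have : (la - (p + g)) * (1 - θ) = (la - p) * (1 - θ) + (-(1 - θ) * g) := by ring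
    rw [this, Real.exp_add, hB]
    ring
  have hY : (1 - lam) * (g3mReserves θ 1 p).2 + lam * (g3mReserves θ 1 (p + g)).2
      = Real.exp ((p - la) * θ) * A := by
    simp only [g3mReserves, one_mul, hy]
    have : (p + g - la) * θ = (p - la) * θ + θ * g := by ring
    rw [this, Real.exp_add, hA]
    ring
  have key : g3mLogMarginPrice θ
      ((1 - lam) * (g3mReserves θ 1 p).1 + lam * (g3mReserves θ 1 (p + g)).1)
      ((1 - lam) * (g3mReserves θ 1 p).2 + lam * (g3mReserves θ 1 (p + g)).2)
      = p + Real.log A - Real.log B := by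
    rw [g3mLogMarginPrice, hX, hY, hea]
    have hquot : Real.exp la * (Real.exp ((p - la) * θ) * A /
        (Real.exp ((la - p) * (1 - θ)) * B)) = Real.exp p * A / B := by
      rw [mul_div_assoc', div_eq_div_iff (by positivity) (ne_of_gt hBpos)]
      have h1 : Real.exp la * Real.exp ((p - la) * θ)
          = Real.exp p * Real.exp ((la - p) * (1 - θ)) := by
        rw [← Real.exp_add, ← Real.exp_add]; congr 1; ring
      linear_combination A * B * h1
    rw [hquot, Real.log_div (by positivity) (ne_of_gt hBpos),
      Real.log_mul (by positivity) (ne_of_gt hApos), Real.log_exp]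
  refine ⟨key, ?_⟩
  rw [key, Psi]
  ring
end

section
/- Let θ ∈ (0,1) and λ ∈ (0,1]. The map Ψ(g) = g − log(1 − λ + λ·e^{θg}) + log(1 − λ + λ·e^{−(1−θ)g}) is differentiable on ℝ with Ψ'(g) = 1 − (λθ·e^{θg})/(1 − λ + λ·e^{θg}) − (λ(1−θ)·e^{−(1−θ)g})/(1 − λ + λ·e^{−(1−θ)g}), and for every g ∈ ℝ one has 0 ≤ Ψ'(g) ≤ ρ, where ρ = 1 − λ·min(θ, 1−θ) ∈ (0,1). -/
open Real

/-- The claimed derivative of `Psi`. -/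
noncomputable def PsiDeriv (θ lam g : ℝ) : ℝ :=
  1 - lam * θ * Real.exp (θ * g) / (1 - lam + lam * Real.exp (θ * g))
    - lam * (1 - θ) * Real.exp (-(1 - θ) * g) / (1 - lam + lam * Real.exp (-(1 - θ) * g))

/-! Writing `w t = λeᵗ / (1 - λ + λeᵗ)` for the derivative of `t ↦ log (1 - λ + λeᵗ)`, one has
`Ψ' g = 1 - θ w(θg) - (1 - θ) w(-(1 - θ)g)`. Since `w` takes values in `[0, 1]`, the subtracted
term is a convex combination of numbers in `[0, 1]`, so `Ψ' ≥ 0`; and `w t ≥ λ` for `t ≥ 0`, so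
whichever of `θg`, `-(1 - θ)g` is nonnegative contributes at least `λ min θ (1 - θ)`. -/

noncomputable def mixWeight (lam t : ℝ) : ℝ :=
  lam * exp t / (1 - lam + lam * exp t)

section MixWeight

variable {lam : ℝ}

lemma one_sub_add_mul_exp_pos (hl0 : 0 ≤ lam) (hl1 : lam ≤ 1) (t : ℝ) :
    0 < 1 - lam + lam * exp t := by
  rcases hl1.lt_or_eq with hl1 | rfl
  · nlinarith [exp_pos t]
  · simpa using exp_pos t

lemma mixWeight_nonneg (hl0 : 0 ≤ lam) (hl1 : lam ≤ 1) (t : ℝ) : 0 ≤ mixWeight lam t :=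
  div_nonneg (mul_nonneg hl0 (exp_pos t).le) (one_sub_add_mul_exp_pos hl0 hl1 t).le

lemma mixWeight_le_one (hl0 : 0 ≤ lam) (hl1 : lam ≤ 1) (t : ℝ) : mixWeight lam t ≤ 1 := by
  rw [mixWeight, div_le_one (one_sub_add_mul_exp_pos hl0 hl1 t)]
  linarith

lemma le_mixWeight (hl0 : 0 ≤ lam) (hl1 : lam ≤ 1) {t : ℝ} (ht : 0 ≤ t) :
    lam ≤ mixWeight lam t := by
  rw [mixWeight, le_div_iff₀ (one_sub_add_mul_exp_pos hl0 hl1 t)]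
  nlinarith [mul_nonneg (mul_nonneg hl0 (sub_nonneg.mpr hl1)) (sub_nonneg.mpr (one_le_exp ht))]

lemma hasDerivAt_log_one_sub_add_mul_exp (hl0 : 0 ≤ lam) (hl1 : lam ≤ 1) (c g : ℝ) :
    HasDerivAt (fun g => log (1 - lam + lam * exp (c * g))) (c * mixWeight lam (c * g)) g := by
  have hexp : HasDerivAt (fun g => exp (c * g)) (exp (c * g) * c) g := by
    simpa using ((hasDerivAt_id g).const_mul c).exp
  convert ((hexp.const_mul lam).const_add (1 - lam)).log
    (one_sub_add_mul_exp_pos hl0 hl1 (c * g)).ne' using 1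
  rw [mixWeight]
  ring

end MixWeight

lemma psiDeriv_eq (θ lam g : ℝ) :
    PsiDeriv θ lam g = 1 - θ * mixWeight lam (θ * g) - (1 - θ) * mixWeight lam (-(1 - θ) * g) := by
  simp only [PsiDeriv, mixWeight]
  ring

lemma hasDerivAt_psi {lam : ℝ} (hl0 : 0 ≤ lam) (hl1 : lam ≤ 1) (θ g : ℝ) :
    HasDerivAt (Psi θ lam) (PsiDeriv θ lam g) g := by
  rw [psiDeriv_eq]
  exact (((hasDerivAt_id g).sub (hasDerivAt_log_one_sub_add_mul_exp hl0 hl1 θ g)).add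
    (hasDerivAt_log_one_sub_add_mul_exp hl0 hl1 (-(1 - θ)) g)).congr_deriv (by ring)

lemma psiDeriv_nonneg {θ lam : ℝ} (hθ0 : 0 ≤ θ) (hθ1 : θ ≤ 1) (hl0 : 0 ≤ lam) (hl1 : lam ≤ 1)
    (g : ℝ) : 0 ≤ PsiDeriv θ lam g := by
  rw [psiDeriv_eq]
  nlinarith [mixWeight_le_one hl0 hl1 (θ * g), mixWeight_le_one hl0 hl1 (-(1 - θ) * g)]

lemma psiDeriv_le {θ lam : ℝ} (hθ0 : 0 ≤ θ) (hθ1 : θ ≤ 1) (hl0 : 0 ≤ lam) (hl1 : lam ≤ 1)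
    (g : ℝ) : PsiDeriv θ lam g ≤ 1 - lam * min θ (1 - θ) := by
  rw [psiDeriv_eq]
  have ha := mixWeight_nonneg hl0 hl1 (θ * g)
  have hb := mixWeight_nonneg hl0 hl1 (-(1 - θ) * g)
  rcases le_total 0 g with hg | hg
  · have := le_mixWeight hl0 hl1 (mul_nonneg hθ0 hg)
    nlinarith [min_le_left θ (1 - θ)]
  · have hg' : 0 ≤ -(1 - θ) * g := mul_nonneg_of_nonpos_of_nonpos (by linarith) hg
    have := le_mixWeight hl0 hl1 hg'
    nlinarith [min_le_right θ (1 - θ)]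

theorem stmt1 (θ lam : ℝ) (hθ : θ ∈ Set.Ioo (0:ℝ) 1) (hlam : lam ∈ Set.Ioc (0:ℝ) 1) :
    (∀ g : ℝ, HasDerivAt (Psi θ lam) (PsiDeriv θ lam g) g) ∧
    (∀ g : ℝ, 0 ≤ PsiDeriv θ lam g ∧ PsiDeriv θ lam g ≤ 1 - lam * min θ (1 - θ)) ∧
    1 - lam * min θ (1 - θ) ∈ Set.Ioo (0:ℝ) 1 := by
  obtain ⟨hθ0, hθ1⟩ := hθ
  obtain ⟨hl0, hl1⟩ := hlam
  have hmin_pos : 0 < min θ (1 - θ) := lt_min hθ0 (by linarith)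
  have hmin_lt : min θ (1 - θ) < 1 := (min_le_left _ _).trans_lt hθ1
  refine ⟨hasDerivAt_psi hl0.le hl1 θ,
    fun g => ⟨psiDeriv_nonneg hθ0.le hθ1.le hl0.le hl1 g, psiDeriv_le hθ0.le hθ1.le hl0.le hl1 g⟩,
    ?_, ?_⟩
  · nlinarith
  · nlinarith
end

section
/- Let θ ∈ (0,1), λ ∈ (0,1], L > 0, p, g ∈ ℝ. For the two-asset geometric mean market maker with invariant φ(x,y) = x^θ·y^{1−θ}, the liquidity of the mixed reserve vector (1−λ)·R(L,p) + λ·R(L,p+g) equals L·(1 − λ + λ·e^{−(1−θ)g})^{θ}·(1 − λ + λ·e^{θg})^{1−θ}. Equivalently, the one-block change in log-liquidity of the partially active AMM with pre-arbitrage gap g is h(g) = θ·log(1 − λ + λ·e^{−(1−θ)g}) + (1−θ)·log(1 − λ + λ·e^{θg}). -/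
open Real

/-- G3M invariant function `φ(x,y) = x^θ · y^(1-θ)` (real powers). -/
noncomputable def g3mInvariant (θ x y : ℝ) : ℝ := x ^ θ * y ^ (1 - θ)

/-- One-block change in log-liquidity of the partially active G3M at
pre-arbitrage gap `g`. -/
noncomputable def liqGrowth (θ lam g : ℝ) : ℝ :=
  θ * Real.log (1 - lam + lam * Real.exp (-(1 - θ) * g))
    + (1 - θ) * Real.log (1 - lam + lam * Real.exp (θ * g))

theorem stmt10 (θ lam L p g : ℝ) (hθ : θ ∈ Set.Ioo (0:ℝ) 1)
    (hlam : lam ∈ Set.Ioc (0:ℝ) 1) (hL : 0 < L) :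
    g3mInvariant θ
      ((1 - lam) * (g3mReserves θ L p).1 + lam * (g3mReserves θ L (p + g)).1)
      ((1 - lam) * (g3mReserves θ L p).2 + lam * (g3mReserves θ L (p + g)).2)
      = L * (1 - lam + lam * Real.exp (-(1 - θ) * g)) ^ θ
          * (1 - lam + lam * Real.exp (θ * g)) ^ (1 - θ) ∧
    Real.log
      (g3mInvariant θ
        ((1 - lam) * (g3mReserves θ L p).1 + lam * (g3mReserves θ L (p + g)).1)
        ((1 - lam) * (g3mReserves θ L p).2 + lam * (g3mReserves θ L (p + g)).2))
      - Real.log L = liqGrowth θ lam g := by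
  obtain ⟨hθ0, hθ1⟩ := hθ
  obtain ⟨hlam0, hlam1⟩ := hlam
  have h1θ : (0:ℝ) < 1 - θ := by linarith
  set A : ℝ := 1 - lam + lam * Real.exp (-(1 - θ) * g) with hA
  set B : ℝ := 1 - lam + lam * Real.exp (θ * g) with hB
  have hApos : 0 < A := by
    have := Real.exp_pos (-(1 - θ) * g)
    nlinarith
  have hBpos : 0 < B := by
    have := Real.exp_pos (θ * g)
    nlinarith
  have hc1 : (0:ℝ) < θ / (1 - θ) * Real.exp (-p) := by positivity
  have hc2 : (0:ℝ) < (1 - θ) / θ * Real.exp p := by positivity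
  -- x-sum
  have hx : (1 - lam) * (g3mReserves θ L p).1 + lam * (g3mReserves θ L (p + g)).1
      = L * (θ / (1 - θ) * Real.exp (-p)) ^ (1 - θ) * A := by
    simp only [g3mReserves]
    have he : θ / (1 - θ) * Real.exp (-(p + g))
        = (θ / (1 - θ) * Real.exp (-p)) * Real.exp (-g) := by
      rw [mul_assoc, ← Real.exp_add]; ring_nf
    rw [he, Real.mul_rpow hc1.le (Real.exp_pos _).le, ← Real.exp_mul]
    rw [hA]
    ring_nf
  have hy : (1 - lam) * (g3mReserves θ L p).2 + lam * (g3mReserves θ L (p + g)).2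
      = L * ((1 - θ) / θ * Real.exp p) ^ θ * B := by
    simp only [g3mReserves]
    have he : (1 - θ) / θ * Real.exp (p + g)
        = ((1 - θ) / θ * Real.exp p) * Real.exp g := by
      rw [mul_assoc, ← Real.exp_add]
    rw [he, Real.mul_rpow hc2.le (Real.exp_pos _).le, ← Real.exp_mul]
    rw [hB]
    ring_nf
  have key : g3mInvariant θ
      ((1 - lam) * (g3mReserves θ L p).1 + lam * (g3mReserves θ L (p + g)).1)
      ((1 - lam) * (g3mReserves θ L p).2 + lam * (g3mReserves θ L (p + g)).2)
      = L * A ^ θ * B ^ (1 - θ) := by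
    rw [hx, hy]
    unfold g3mInvariant
    rw [Real.mul_rpow (by positivity) hApos.le, Real.mul_rpow (by positivity) hBpos.le,
        Real.mul_rpow hL.le (Real.rpow_nonneg hc1.le _),
        Real.mul_rpow hL.le (Real.rpow_nonneg hc2.le _)]
    have hLL : L ^ θ * L ^ (1 - θ) = L := by
      rw [← Real.rpow_add hL]; simp
    have hcc : ((θ / (1 - θ) * Real.exp (-p)) ^ (1 - θ)) ^ θ
        * (((1 - θ) / θ * Real.exp p) ^ θ) ^ (1 - θ) = 1 := by
      rw [← Real.rpow_mul hc1.le, ← Real.rpow_mul hc2.le, mul_comm θ (1 - θ),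
          ← Real.mul_rpow hc1.le hc2.le]
      have : θ / (1 - θ) * Real.exp (-p) * ((1 - θ) / θ * Real.exp p) = 1 := by
        rw [Real.exp_neg]
        field_simp
      rw [this, Real.one_rpow]
    calc L ^ θ * ((θ / (1 - θ) * Real.exp (-p)) ^ (1 - θ)) ^ θ * A ^ θ
          * (L ^ (1 - θ) * (((1 - θ) / θ * Real.exp p) ^ θ) ^ (1 - θ) * B ^ (1 - θ))
        = (L ^ θ * L ^ (1 - θ)) * (((θ / (1 - θ) * Real.exp (-p)) ^ (1 - θ)) ^ θ
            * (((1 - θ) / θ * Real.exp p) ^ θ) ^ (1 - θ)) * (A ^ θ * B ^ (1 - θ)) := by ring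
      _ = L * A ^ θ * B ^ (1 - θ) := by rw [hLL, hcc]; ring
  refine ⟨key, ?_⟩
  rw [key, mul_assoc, Real.log_mul hL.ne' (by positivity),
      Real.log_mul (by positivity) (by positivity),
      Real.log_rpow hApos, Real.log_rpow hBpos]
  unfold liqGrowth
  rw [← hA, ← hB]
  ring
end

section
/- Let θ ∈ (0,1) and λ ∈ (0,1]. The log-liquidity growth function h(g) = θ·log(1 − λ + λ·e^{−(1−θ)g}) + (1−θ)·log(1 − λ + λ·e^{θg}) satisfies h(g) ≥ 0 for all g ∈ ℝ, and if λ ∈ (0,1) and g ≠ 0 then h(g) > 0. That is, the liquidity per unit of LP supply of the partially active AMM never decreases under zero-fee arbitrage, and strictly increases whenever λ < 1 and the price gap is nonzero. -/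
open Real

lemma key_le (lam t : ℝ) (h0 : 0 < lam) (h1 : lam ≤ 1) :
    lam * t ≤ Real.log (1 - lam + lam * Real.exp t) := by
  have hconv := convexOn_exp.2 (Set.mem_univ (0:ℝ)) (Set.mem_univ t)
    (by linarith : (0:ℝ) ≤ 1 - lam) (le_of_lt h0) (by ring)
  simp only [smul_eq_mul, mul_zero, zero_add, Real.exp_zero, mul_one] at hconv
  have := Real.log_le_log (Real.exp_pos _) hconv
  rwa [Real.log_exp] at this

lemma key_lt (lam t : ℝ) (h0 : 0 < lam) (h1 : lam < 1) (ht : t ≠ 0) :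
    lam * t < Real.log (1 - lam + lam * Real.exp t) := by
  have hconv := strictConvexOn_exp.2 (Set.mem_univ (0:ℝ)) (Set.mem_univ t)
    (Ne.symm ht) (by linarith : (0:ℝ) < 1 - lam) h0 (by ring)
  simp only [smul_eq_mul, mul_zero, zero_add, Real.exp_zero, mul_one] at hconv
  have := Real.log_lt_log (Real.exp_pos _) hconv
  rwa [Real.log_exp] at this

theorem stmt11 (θ lam : ℝ) (hθ : θ ∈ Set.Ioo (0:ℝ) 1) (hlam : lam ∈ Set.Ioc (0:ℝ) 1) :
    (∀ g : ℝ, 0 ≤ liqGrowth θ lam g) ∧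
    (lam < 1 → ∀ g : ℝ, g ≠ 0 → 0 < liqGrowth θ lam g) := by
  obtain ⟨hθ0, hθ1⟩ := hθ
  obtain ⟨hl0, hl1⟩ := hlam
  constructor
  · intro g
    have h1 := key_le lam (-(1 - θ) * g) hl0 hl1
    have h2 := key_le lam (θ * g) hl0 hl1
    have := add_le_add (mul_le_mul_of_nonneg_left h1 (le_of_lt hθ0))
      (mul_le_mul_of_nonneg_left h2 (by linarith : (0:ℝ) ≤ 1 - θ))
    unfold liqGrowth
    nlinarith [this]
  · intro hlt g hg
    have h1 := key_lt lam (-(1 - θ) * g) hl0 hlt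
      (by
        intro h
        rcases mul_eq_zero.mp h with h | h
        · linarith [neg_eq_zero.mp h]
        · exact hg h)
    have h2 := key_lt lam (θ * g) hl0 hlt
      (by intro h; apply hg; rcases mul_eq_zero.mp h with h | h <;> [linarith; exact h])
    have := add_lt_add (mul_lt_mul_of_pos_left h1 hθ0)
      (mul_lt_mul_of_pos_left h2 (by linarith : (0:ℝ) < 1 - θ))
    unfold liqGrowth
    nlinarith [this]
end
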